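/- Let K be a countable field. Then there exists a textile map G : K[[x]] → K[[x]] in one variable x (with each coefficient of G(y(x)) a polynomial in finitely many coefficients of y(x)) such that G = 0 admits approximate solutions modulo (x)^l for every l ∈ ℕ but admits no exact solution. Hence the Strong Approximation Theorem for Textile Maps fails for every countable field. -/

import Mathlib

/-!
Enumerate `K = {α₀, α₁, …}` and impose `(y₀ - α_{l-1}) y_l = 1` for `l ≥ 1`. An exact solution
is impossible: `y₀ = α_m` for some `m`, and then the equation at `l = m + 1` reads `0 = 1`.
But the equations below `N + 1` are solved by `y₀ = α_N`, `y_k = (α_N - α_{k-1})⁻¹`, since the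
enumeration is injective.
-/

open MvPolynomial

namespace TextileCounterexample

variable {R : Type*} [CommRing R]

/-- The coefficient polynomials of `G(y) = ∑_{l ≥ 1} ((y₀ - α_{l-1}) y_l - 1) xˡ`. -/
noncomputable def coeffPoly (α : ℕ → R) : ℕ → MvPolynomial ℕ R
  | 0 => 0
  | l + 1 => (X 0 - C (α l)) * X (l + 1) - 1

@[simp]
theorem eval_coeffPoly_zero (α : ℕ → R) (f : ℕ → R) : eval f (coeffPoly α 0) = 0 := by
  simp [coeffPoly]

@[simp]
theorem eval_coeffPoly_succ (α : ℕ → R) (f : ℕ → R) (l : ℕ) :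
    eval f (coeffPoly α (l + 1)) = (f 0 - α l) * f (l + 1) - 1 := by
  simp [coeffPoly]

theorem not_forall_eval_coeffPoly_eq_zero [Nontrivial R] {α : ℕ → R}
    (hα : Function.Surjective α) (f : ℕ → R) : ¬ ∀ l, eval f (coeffPoly α l) = 0 := by
  intro h
  obtain ⟨m, hm⟩ := hα (f 0)
  simpa [hm] using h (m + 1)

section Field

variable {K : Type*} [Field K]

noncomputable def approxSolution (α : ℕ → K) (N : ℕ) : PowerSeries K :=
  PowerSeries.mk fun
    | 0 => α N
    | k + 1 => (α N - α k)⁻¹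

theorem eval_coeffPoly_approxSolution {α : ℕ → K} {N : ℕ} (hα : ∀ k < N, α k ≠ α N)
    {l : ℕ} (hl : l ≤ N) :
    eval (fun k => PowerSeries.coeff k (approxSolution α N)) (coeffPoly α l) = 0 := by
  cases l with
  | zero => exact eval_coeffPoly_zero _ _
  | succ l =>
    have hne : α N - α l ≠ 0 := sub_ne_zero.2 (hα l (by omega)).symm
    simp [approxSolution, mul_inv_cancel₀ hne]

end Field

end TextileCounterexample

open TextileCounterexample

/-- Over any countably infinite field `K` the Strong Approximation Theorem for
Textile Maps fails: there is a textile map `G : K[[x]] → K[[x]]` in one variable,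
encoded by its coefficient polynomials `P l` (polynomials in finitely many
coefficients `y_k` of `y`), which admits approximate solutions modulo `(x)^l` for
every `l` but admits no exact solution. (Infiniteness is needed: the enumeration
`α_0, α_1, …` must provide, for each `N`, an element distinct from `α_0, …, α_{N-1}`.) -/
theorem strong_approximation_fails_countable_field
    (K : Type*) [Field K] [Countable K] [Infinite K] :
    ∃ P : ℕ → MvPolynomial ℕ K,
      (∀ l : ℕ, ∃ y : PowerSeries K,
        ∀ b : ℕ, b < l →
          MvPolynomial.eval (fun k => PowerSeries.coeff k y) (P b) = 0) ∧
      ¬ ∃ y : PowerSeries K,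
        ∀ b : ℕ,
          MvPolynomial.eval (fun k => PowerSeries.coeff k y) (P b) = 0 := by
  obtain ⟨e⟩ : Nonempty (ℕ ≃ K) := nonempty_equiv_of_countable
  refine ⟨coeffPoly e, fun l => ⟨approxSolution e l, fun b hb => ?_⟩, ?_⟩
  · exact eval_coeffPoly_approxSolution (fun k hk => e.injective.ne hk.ne) hb.le
  · rintro ⟨y, hy⟩
    exact not_forall_eval_coeffPoly_eq_zero e.surjective _ hy
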